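/- (Partial integral equals partial trace.) Let n > 2 and m > 2, let Q₀ be a fixed rank-one orthogonal projection on ℂᵐ, and let μₘ be the normalized Haar probability measure on U(m). For every complex matrix M indexed by (Fin n × Fin m) × (Fin n × Fin m) and every rank-one orthogonal projection p on ℂⁿ, m·∫_{U(m)} tr( M·(p ⊗ₖ (V Q₀ Vᴴ)) ) dμₘ(V) = tr( (tr₂ M)·p ), where tr₂ M is the partial trace over the second factor, (tr₂ M) i j = Σ_k M (i,k) (j,k). -/

import Mathlib

/-!
Averaging `V Q₀ Vᴴ` over Haar measure gives a matrix `A` that, by left invariance, commutes with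
every unitary. Commuting with the diagonal sign matrices and with the transpositions forces `A` to
be a scalar, and since conjugation preserves the trace, `m • A = tr Q₀ • 1 = 1`. The integrand is
linear in `V Q₀ Vᴴ`, so `m` times the integral is `tr (M (p ⊗ₖ 1))`, which is `tr ((tr₂ M) p)`.
-/

open MeasureTheory Matrix Kronecker

noncomputable instance (k : Type*) [Fintype k] [DecidableEq k] :
    MeasurableSpace (Matrix.unitaryGroup k ℂ) := borel _

/-- `p` is a rank-one orthogonal projection. -/
def IsRankOneProj {k : Type*} [Fintype k] [DecidableEq k] (p : Matrix k k ℂ) : Prop :=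
  p.IsHermitian ∧ p * p = p ∧ p.rank = 1

/-- Partial trace over the second factor. -/
noncomputable def ptrace2 {n m : ℕ} (M : Matrix (Fin n × Fin m) (Fin n × Fin m) ℂ) :
    Matrix (Fin n) (Fin n) ℂ :=
  Matrix.of fun i j => ∑ k : Fin m, M (i, k) (j, k)

instance (k : Type*) [Fintype k] [DecidableEq k] :
    BorelSpace (Matrix.unitaryGroup k ℂ) := ⟨rfl⟩

instance (k : Type*) [Fintype k] [DecidableEq k] : CompactSpace (unitaryGroup k ℂ) := by
  have hK : IsCompact (Set.univ.pi fun _ => Set.univ.pi fun _ => Metric.closedBall 0 1 :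
      Set (Matrix k k ℂ)) :=
    isCompact_univ_pi fun _ => isCompact_univ_pi fun _ => isCompact_closedBall 0 1
  refine isCompact_iff_compactSpace.mp
    (hK.of_isClosed_subset (isClosed_unitary (R := Matrix k k ℂ)) ?_)
  exact fun U hU i _ j _ => mem_closedBall_zero_iff.mpr (entry_norm_bound_of_unitary hU i j)

section MatrixIntegral

variable {X ι κ 𝕜 : Type*} [MeasurableSpace X] [Fintype ι] [Fintype κ] [DecidableEq ι]
  [DecidableEq κ] [RCLike 𝕜]

/-- Entrywise integral: matrices carry no canonical norm, so the Bochner integral of a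
matrix-valued map is not available without choosing one. -/
noncomputable def matrixIntegral (μ : Measure X) (F : X → Matrix ι κ 𝕜) : Matrix ι κ 𝕜 :=
  of fun i j => ∫ x, F x i j ∂μ

theorem LinearMap.exists_eq_sum_entry_mul (L : Matrix ι κ 𝕜 →ₗ[𝕜] 𝕜) :
    ∃ c : ι → κ → 𝕜, ∀ A, L A = ∑ i, ∑ j, A i j * c i j := by
  refine ⟨fun i j => L (Matrix.single i j 1), fun A => ?_⟩
  nth_rewrite 1 [matrix_eq_sum_single A]
  simp only [map_sum]
  refine Finset.sum_congr rfl fun i _ => Finset.sum_congr rfl fun j _ => ?_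
  rw [show Matrix.single i j (A i j) = A i j • Matrix.single i j 1 by simp, map_smul, smul_eq_mul]

theorem integral_linearMap_eq_apply_matrixIntegral {μ : Measure X} {F : X → Matrix ι κ 𝕜}
    (hF : ∀ i j, Integrable (fun x => F x i j) μ) (L : Matrix ι κ 𝕜 →ₗ[𝕜] 𝕜) :
    ∫ x, L (F x) ∂μ = L (matrixIntegral μ F) := by
  obtain ⟨c, hc⟩ := L.exists_eq_sum_entry_mul
  simp only [hc, matrixIntegral, of_apply]
  rw [integral_finsetSum _ fun i _ => integrable_finsetSum _ fun j _ => (hF i j).mul_const _]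
  refine Finset.sum_congr rfl fun i _ => ?_
  rw [integral_finsetSum _ fun j _ => (hF i j).mul_const _]
  exact Finset.sum_congr rfl fun j _ => integral_mul_const _ _

end MatrixIntegral

variable {k : Type*} [Fintype k] [DecidableEq k]

theorem Matrix.trace_eq_rank_of_isIdempotentElem {K : Type*} [Field K] {Q : Matrix k k K}
    (hQ : IsIdempotentElem Q) : Q.trace = Q.rank := by
  have hP : IsIdempotentElem (toLin' Q) := hQ.map toLinAlgEquiv'
  rw [← trace_toLin'_eq, ((LinearMap.isProj_range_iff_isIdempotentElem _).mpr hP).trace]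
  rfl

theorem IsRankOneProj.trace_eq_one {Q : Matrix k k ℂ} (hQ : IsRankOneProj Q) : Q.trace = 1 := by
  rw [trace_eq_rank_of_isIdempotentElem hQ.2.1, hQ.2.2, Nat.cast_one]

section CommuteUnitaryGroup

variable {R 𝕜 : Type*} [CommRing R] [StarRing R] [RCLike 𝕜]

theorem Matrix.swap_mem_unitaryGroup (i j : k) : swap R i j ∈ unitaryGroup k R := by
  rw [mem_unitaryGroup_iff, star_eq_conjTranspose, conjTranspose_swap, swap_mul_self]

theorem Matrix.diagonal_mem_unitaryGroup {d : k → R} (hd : ∀ i, d i * star (d i) = 1) :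
    diagonal d ∈ unitaryGroup k R := by
  rw [mem_unitaryGroup_iff, star_eq_conjTranspose, diagonal_conjTranspose, diagonal_mul_diagonal]
  exact diagonal_eq_one.mpr (funext hd)

variable {A : Matrix k k 𝕜} (hA : ∀ W ∈ unitaryGroup k 𝕜, Commute W A)
include hA

theorem apply_eq_zero_of_forall_commute_unitary {a b : k} (hab : a ≠ b) : A a b = 0 := by
  let d : k → 𝕜 := fun j => if j = a then -1 else 1
  have hd : ∀ j, d j * star (d j) = 1 := fun j => by by_cases h : j = a <;> simp [d, h]
  have h := congrFun₂ (hA _ (diagonal_mem_unitaryGroup hd)).eq a b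
  simp only [diagonal_mul, mul_diagonal, d, if_true, if_neg hab.symm] at h
  linear_combination -h / 2

theorem apply_self_eq_of_forall_commute_unitary (a b : k) : A a a = A b b := by
  have h := congrFun₂ (hA _ (swap_mem_unitaryGroup a b)).eq a b
  rwa [swap_mul_apply_left, mul_swap_apply_right, eq_comm] at h

theorem card_smul_eq_trace_smul_one_of_forall_commute_unitary :
    (Fintype.card k : 𝕜) • A = A.trace • 1 := by
  ext a b
  rcases eq_or_ne a b with rfl | hab
  · simp [trace, ← apply_self_eq_of_forall_commute_unitary hA a]
  · simp [one_apply_ne hab, apply_eq_zero_of_forall_commute_unitary hA hab]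

end CommuteUnitaryGroup

section ConjAverage

variable (μ : Measure (unitaryGroup k ℂ)) (Q : Matrix k k ℂ)

noncomputable def conjAverage : Matrix k k ℂ :=
  matrixIntegral μ fun V => V.1 * Q * V.1ᴴ

theorem integrable_conj_apply [IsFiniteMeasure μ] (i j : k) :
    Integrable (fun V : unitaryGroup k ℂ => (V.1 * Q * V.1ᴴ) i j) μ := by
  refine Continuous.integrable_of_hasCompactSupport ?_ (HasCompactSupport.of_compactSpace _)
  have hV : Continuous fun V : unitaryGroup k ℂ => V.1 := continuous_subtype_val
  exact ((hV.matrix_mul continuous_const).matrix_mul hV.matrix_conjTranspose).matrix_elem i j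

theorem integral_linearMap_conj [IsFiniteMeasure μ] (L : Matrix k k ℂ →ₗ[ℂ] ℂ) :
    ∫ V, L (V.1 * Q * V.1ᴴ) ∂μ = L (conjAverage μ Q) :=
  integral_linearMap_eq_apply_matrixIntegral (integrable_conj_apply μ Q) L

theorem conj_conjAverage [IsFiniteMeasure μ] [μ.IsMulLeftInvariant] (W : unitaryGroup k ℂ) :
    W.1 * conjAverage μ Q * W.1ᴴ = conjAverage μ Q := by
  ext a b
  let L : Matrix k k ℂ →ₗ[ℂ] ℂ :=
    entryLinearMap ℂ ℂ a b ∘ₗ LinearMap.mulLeft ℂ W.1 ∘ₗ LinearMap.mulRight ℂ W.1ᴴ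
  have hL : ∀ V : unitaryGroup k ℂ, L (V.1 * Q * V.1ᴴ) = ((W * V).1 * Q * (W * V).1ᴴ) a b :=
    fun V => by simp [L, Matrix.mul_assoc]
  calc (W.1 * conjAverage μ Q * W.1ᴴ) a b = L (conjAverage μ Q) := by simp [L, Matrix.mul_assoc]
    _ = ∫ V, ((W * V).1 * Q * (W * V).1ᴴ) a b ∂μ := by
      rw [← integral_linearMap_conj]; simp_rw [hL]
    _ = conjAverage μ Q a b := integral_mul_left_eq_self (fun V => (V.1 * Q * V.1ᴴ) a b) W

theorem trace_conjAverage [IsProbabilityMeasure μ] : (conjAverage μ Q).trace = Q.trace := by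
  have hconj : ∀ V : unitaryGroup k ℂ, (V.1 * Q * V.1ᴴ).trace = Q.trace := fun V => by
    rw [trace_mul_cycle, ← star_eq_conjTranspose, Unitary.star_mul_self_of_mem V.2, Matrix.one_mul]
  rw [← traceLinearMap_apply k ℂ ℂ, ← integral_linearMap_conj]
  simp [hconj]

theorem card_smul_conjAverage [IsProbabilityMeasure μ] [μ.IsMulLeftInvariant] :
    (Fintype.card k : ℂ) • conjAverage μ Q = Q.trace • 1 := by
  rw [card_smul_eq_trace_smul_one_of_forall_commute_unitary, trace_conjAverage]
  intro W hW
  calc W * conjAverage μ Q = W * conjAverage μ Q * (Wᴴ * W) := by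
        rw [← star_eq_conjTranspose, Unitary.star_mul_self_of_mem hW, Matrix.mul_one]
    _ = conjAverage μ Q * W := by
        rw [← Matrix.mul_assoc, conj_conjAverage μ Q ⟨W, hW⟩]

end ConjAverage

theorem trace_mul_kronecker_one {n m : ℕ} (M : Matrix (Fin n × Fin m) (Fin n × Fin m) ℂ)
    (p : Matrix (Fin n) (Fin n) ℂ) : (M * (p ⊗ₖ 1)).trace = (ptrace2 M * p).trace := by
  simp only [trace, diag, mul_apply, kroneckerMap_apply, one_apply, ptrace2, of_apply,
    Fintype.sum_prod_type, mul_ite, mul_one, mul_zero, Finset.sum_ite_eq', Finset.mem_univ,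
    if_true, Finset.sum_mul]
  exact Finset.sum_congr rfl fun i _ => Finset.sum_comm

theorem partial_integral_eq_partial_trace_general (n m : ℕ)
    (Q₀ : Matrix (Fin m) (Fin m) ℂ) (hQ₀ : IsRankOneProj Q₀)
    (μm : Measure (Matrix.unitaryGroup (Fin m) ℂ))
    [IsProbabilityMeasure μm] [μm.IsMulLeftInvariant]
    (M : Matrix (Fin n × Fin m) (Fin n × Fin m) ℂ)
    (p : Matrix (Fin n) (Fin n) ℂ) :
    (m : ℂ) * ∫ V : Matrix.unitaryGroup (Fin m) ℂ,
        (M * (p ⊗ₖ (V.1 * Q₀ * (V.1)ᴴ))).trace ∂μm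
      = (ptrace2 M * p).trace := by
  let L : Matrix (Fin m) (Fin m) ℂ →ₗ[ℂ] ℂ :=
    traceLinearMap _ ℂ ℂ ∘ₗ LinearMap.mulLeft ℂ M ∘ₗ kroneckerBilinear (R := ℂ) p
  calc (m : ℂ) * ∫ V : Matrix.unitaryGroup (Fin m) ℂ,
        (M * (p ⊗ₖ (V.1 * Q₀ * (V.1)ᴴ))).trace ∂μm
      = L ((Fintype.card (Fin m) : ℂ) • conjAverage μm Q₀) := by
        rw [map_smul, Fintype.card_fin, smul_eq_mul, ← integral_linearMap_conj]; rfl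
    _ = L 1 := by rw [card_smul_conjAverage, hQ₀.trace_eq_one, one_smul]
    _ = (ptrace2 M * p).trace := trace_mul_kronecker_one M p

/-- Partial integral equals partial trace:
`m ∫ tr(M (p ⊗ₖ q_V)) dμₘ(V) = tr((tr₂ M) p)`. -/
theorem partial_integral_eq_partial_trace (n m : ℕ) (hn : 2 < n) (hm : 2 < m)
    (Q₀ : Matrix (Fin m) (Fin m) ℂ) (hQ₀ : IsRankOneProj Q₀)
    (μm : Measure (Matrix.unitaryGroup (Fin m) ℂ))
    [IsProbabilityMeasure μm] [μm.IsMulLeftInvariant]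
    (M : Matrix (Fin n × Fin m) (Fin n × Fin m) ℂ)
    (p : Matrix (Fin n) (Fin n) ℂ) (hp : IsRankOneProj p) :
    (m : ℂ) * ∫ V : Matrix.unitaryGroup (Fin m) ℂ,
        (M * (p ⊗ₖ (V.1 * Q₀ * (V.1)ᴴ))).trace ∂μm
      = (ptrace2 M * p).trace :=
  partial_integral_eq_partial_trace_general n m Q₀ hQ₀ μm M p
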